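/- arXiv:1902.10356 — 3 statements merged into one kernel-verified Lean document; each statement's English description precedes it below -/
import Mathlib

section
/- The resistance distance on a finite connected simple graph satisfies the triangle inequality: Ω_{ik} ≤ Ω_{ij} + Ω_{jk} for all vertices i, j, k, where Ω_{ij} = (Γ⁻¹)_{ii} + (Γ⁻¹)_{jj} − 2(Γ⁻¹)_{ij} and Γ = L + (1/n)J. -/
open Matrix SimpleGraph Finset

variable {V : Type*} [Fintype V] [DecidableEq V]

/-- The matrix Γ = L + (1/n)J where L is the Laplacian and J the all-ones matrix. -/
noncomputable def gammaMatrix (G : SimpleGraph V) : Matrix V V ℝ := by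
  classical
  exact G.lapMatrix ℝ + ((Fintype.card V : ℝ))⁻¹ • Matrix.of (fun _ _ => (1 : ℝ))

/-- The resistance distance Ω_{ij} = (Γ⁻¹)_{ii} + (Γ⁻¹)_{jj} − 2(Γ⁻¹)_{ij}. -/
noncomputable def resDist (G : SimpleGraph V) (i j : V) : ℝ :=
  (gammaMatrix G)⁻¹ i i + (gammaMatrix G)⁻¹ j j - 2 * (gammaMatrix G)⁻¹ i j

/-!
Let `M = Γ⁻¹`. Since `Γ 1 = 1`, the potential `w = M (e_i - e_j)` has zero sum, hence solves
`L w = e_i - e_j`. It is superharmonic away from `j`, so on a connected graph it attains its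
minimum at `j`: `w j ≤ w k`. With the symmetry of `M`, this inequality is exactly
`Ω_ik ≤ Ω_ij + Ω_jk`.
-/

namespace SimpleGraph

variable (G : SimpleGraph V) [DecidableRel G.Adj]

theorem sum_lapMatrix_mulVec (x : V → ℝ) : ∑ v, (G.lapMatrix ℝ *ᵥ x) v = 0 := by
  have h : (fun _ => (1 : ℝ)) ᵥ* G.lapMatrix ℝ = 0 := by
    rw [← (G.isSymm_lapMatrix (R := ℝ)), vecMul_transpose, lapMatrix_mulVec_const_eq_zero]
  simpa [dotProduct, h] using dotProduct_mulVec (fun _ => (1 : ℝ)) (G.lapMatrix ℝ) x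

/-- `(L w) v` is the sum of the terms `w v - w u` over the neighbours `u`, all nonpositive. -/
theorem eq_of_adj_of_lapMatrix_mulVec_nonneg {w : V → ℝ} {v u : V} (hmin : ∀ x, w v ≤ w x)
    (hLw : 0 ≤ (G.lapMatrix ℝ *ᵥ w) v) (hadj : G.Adj v u) : w u = w v := by
  have hsum : ∑ x ∈ G.neighborFinset v, (w x - w v) = -(G.lapMatrix ℝ *ᵥ w) v := by
    rw [lapMatrix_mulVec_apply, sum_sub_distrib, sum_const, card_neighborFinset_eq_degree,
      nsmul_eq_mul]
    ring
  have hnonneg : ∀ x ∈ G.neighborFinset v, 0 ≤ w x - w v := fun x _ => sub_nonneg.2 (hmin x)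
  have hzero : ∑ x ∈ G.neighborFinset v, (w x - w v) = 0 :=
    le_antisymm (by linarith) (sum_nonneg hnonneg)
  exact sub_eq_zero.1 <| (sum_eq_zero_iff_of_nonneg hnonneg).1 hzero u
    ((G.mem_neighborFinset v u).2 hadj)

variable {G} in
theorem Connected.apply_le_of_lapMatrix_mulVec_nonneg (hG : G.Connected) {w : V → ℝ} {j : V}
    (hw : ∀ v, v ≠ j → 0 ≤ (G.lapMatrix ℝ *ᵥ w) v) (m : V) : w j ≤ w m := by
  obtain ⟨m₀, -, hm₀⟩ := exists_min_image univ w (univ_nonempty_iff.2 ⟨j⟩)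
  suffices ∀ {v u : V} (p : G.Walk v u), u = j → (∀ x, w v ≤ w x) → ∀ x, w j ≤ w x from
    this (hG.preconnected m₀ j).some rfl (fun x => hm₀ x (mem_univ x)) m
  intro v u p
  induction p with
  | nil => exact fun hvj => hvj ▸ id
  | @cons a b _ hab _ ih =>
    intro hj ha
    by_cases haj : a = j
    · exact haj ▸ ha
    · exact ih hj (eq_of_adj_of_lapMatrix_mulVec_nonneg G ha (hw a haj) hab ▸ ha)

end SimpleGraph

section gammaMatrix

variable (G : SimpleGraph V)

theorem gammaMatrix_eq [DecidableRel G.Adj] :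
    gammaMatrix G = G.lapMatrix ℝ + ((Fintype.card V : ℝ))⁻¹ • Matrix.of (fun _ _ => (1 : ℝ)) := by
  unfold gammaMatrix
  congr!

theorem gammaMatrix_isSymm : (gammaMatrix G).IsSymm := by
  classical
  rw [gammaMatrix_eq]
  exact (G.isSymm_lapMatrix (R := ℝ)).add (IsSymm.smul (by ext; rfl) _)

theorem gammaMatrix_mulVec_apply [DecidableRel G.Adj] (x : V → ℝ) (v : V) :
    (gammaMatrix G *ᵥ x) v = (G.lapMatrix ℝ *ᵥ x) v + (Fintype.card V : ℝ)⁻¹ * ∑ u, x u := by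
  simp [gammaMatrix_eq, mulVec, dotProduct, add_mul, sum_add_distrib, mul_sum]

theorem sum_gammaMatrix_mulVec [Nonempty V] (x : V → ℝ) :
    ∑ v, (gammaMatrix G *ᵥ x) v = ∑ v, x v := by
  classical
  simp only [gammaMatrix_mulVec_apply, sum_add_distrib, sum_lapMatrix_mulVec, sum_const,
    card_univ, nsmul_eq_mul, zero_add]
  field_simp

theorem lapMatrix_mulVec_eq_of_gammaMatrix_mulVec_eq [Nonempty V] [DecidableRel G.Adj]
    {x y : V → ℝ} (h : gammaMatrix G *ᵥ x = y) (hy : ∑ v, y v = 0) : G.lapMatrix ℝ *ᵥ x = y := by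
  have hx : ∑ v, x v = 0 := by rw [← sum_gammaMatrix_mulVec, h, hy]
  ext v
  simpa [gammaMatrix_mulVec_apply, hx] using congrFun h v

/-- `Γ x = 0` forces `∑ x = 0` and then `L x = 0`, so `x` is a constant with zero sum. -/
theorem isUnit_det_gammaMatrix [Nonempty V] (hG : G.Connected) : IsUnit (gammaMatrix G).det := by
  classical
  rw [isUnit_iff_ne_zero, Ne, ← exists_mulVec_eq_zero_iff]
  rintro ⟨x, hx0, hx⟩
  have hsum : ∑ v, x v = 0 := by rw [← sum_gammaMatrix_mulVec G, hx]; simp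
  have hconst : ∀ u v, x u = x v := fun u v =>
    G.lapMatrix_mulVec_eq_zero_iff_forall_reachable.1
      (lapMatrix_mulVec_eq_of_gammaMatrix_mulVec_eq G hx (by simp)) u v (hG.preconnected u v)
  refine hx0 (funext fun u => ?_)
  simpa [hconst _ u, Fintype.card_ne_zero] using hsum

theorem gammaMatrix_inv_sub_le [Nonempty V] (hG : G.Connected) (i j k : V) :
    (gammaMatrix G)⁻¹ j i - (gammaMatrix G)⁻¹ j j ≤
      (gammaMatrix G)⁻¹ k i - (gammaMatrix G)⁻¹ k j := by
  classical
  set e : V → ℝ := Pi.single i 1 - Pi.single j 1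
  have hΓw : gammaMatrix G *ᵥ ((gammaMatrix G)⁻¹ *ᵥ e) = e := by
    rw [mulVec_mulVec, mul_nonsing_inv _ (isUnit_det_gammaMatrix G hG), one_mulVec]
  have hLw := lapMatrix_mulVec_eq_of_gammaMatrix_mulVec_eq G hΓw (by simp [e, sum_sub_distrib])
  have hmin := hG.apply_le_of_lapMatrix_mulVec_nonneg (j := j) (w := (gammaMatrix G)⁻¹ *ᵥ e)
    (fun v hv => by simp only [hLw, e, Pi.sub_apply, Pi.single_eq_of_ne hv, sub_zero,
      Pi.single_apply]; positivity) k
  simpa [e, mulVec_sub, mulVec_single_one] using hmin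

end gammaMatrix

theorem resDist_triangle (G : SimpleGraph V) [Nonempty V] (hG : G.Connected) (i j k : V) :
    resDist G i k ≤ resDist G i j + resDist G j k := by
  have hsymm := (gammaMatrix_isSymm G).inv.apply
  have := gammaMatrix_inv_sub_le G hG i j k
  simp only [resDist]
  linarith [hsymm i j, hsymm i k, hsymm j k]
end

section
/- For a finite connected simple graph G on n ≥ 2 vertices, the Kirchhoff index, defined as one half the sum of all entries of the resistance-distance matrix, is at least n − 1, with equality if and only if G is the complete graph K_n. -/
/-!
With `Γ = L + J / n`, which fixes the all-ones vector, `Γ⁻¹` has unit row sums, and summing the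
resistance distances gives `Kf(G) = n · tr Γ⁻¹ - n`. Adding edges to `G` increases `L`, hence `Γ`,
in the Loewner order, so it decreases `Γ⁻¹` and strictly decreases `tr Γ⁻¹` unless the graph is
unchanged (a positive semidefinite matrix of trace zero vanishes, and `G ↦ Γ` is injective).
Hence `Kf` is strictly antitone on connected graphs and is minimised exactly by `K_n`, where
`Γ⁻¹ = I / n + (n - 1) J / n²` and `Kf(K_n) = n - 1`.
-/

open Matrix SimpleGraph Finset

variable {V : Type*} [Fintype V] [DecidableEq V]

namespace Matrix

theorem PosDef.posSemidef_inv_sub_inv {n K : Type*} [Fintype n] [DecidableEq n] [Field K]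
    [PartialOrder K] [StarRing K] [IsOrderedAddMonoid K] {A B : Matrix n n K}
    (hA : A.PosDef) (hB : B.PosDef) (hAB : (B - A).PosSemidef) :
    (A⁻¹ - B⁻¹).PosSemidef := by
  have hA' : IsUnit A.det := (isUnit_iff_isUnit_det A).mp hA.isUnit
  have hB' : IsUnit B.det := (isUnit_iff_isUnit_det B).mp hB.isUnit
  -- `A⁻¹ - B⁻¹ = C A C + B⁻¹ (B - A) B⁻¹` with `C = B⁻¹ - A⁻¹`, a sum of two congruences
  have key : A⁻¹ - B⁻¹ = (B⁻¹ - A⁻¹)ᴴ * A * (B⁻¹ - A⁻¹) + (B⁻¹)ᴴ * (B - A) * B⁻¹ := by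
    rw [conjTranspose_sub, hA.inv.isHermitian.eq, hB.inv.isHermitian.eq]
    simp only [Matrix.sub_mul, Matrix.mul_sub, Matrix.mul_assoc, mul_nonsing_inv _ hA',
      nonsing_inv_mul_cancel_left _ _ hA', nonsing_inv_mul_cancel_left _ _ hB', Matrix.mul_one]
    abel
  rw [key]
  exact (hA.posSemidef.conjTranspose_mul_mul_same _).add (hAB.conjTranspose_mul_mul_same _)

end Matrix

namespace SimpleGraph

theorem posSemidef_lapMatrix_sub_lapMatrix {R : Type*} [Field R] [LinearOrder R]
    [IsStrictOrderedRing R] [StarRing R] [TrivialStar R] {G H : SimpleGraph V}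
    [DecidableRel G.Adj] [DecidableRel H.Adj] (h : G ≤ H) :
    (H.lapMatrix R - G.lapMatrix R).PosSemidef := by
  refine .of_dotProduct_mulVec_nonneg
    ((H.isHermitian_lapMatrix R).sub (G.isHermitian_lapMatrix R)) fun x ↦ ?_
  rw [star_trivial, sub_mulVec, dotProduct_sub, ← toLinearMap₂'_apply', ← toLinearMap₂'_apply',
    lapMatrix_toLinearMap₂', lapMatrix_toLinearMap₂', sub_nonneg]
  gcongr with i _ j _
  split_ifs with hG hH
  · exact le_rfl
  · exact absurd (h hG) hH
  · exact sq_nonneg _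
  · exact le_rfl

theorem eq_of_lapMatrix_eq {R : Type*} [Ring R] [Nontrivial R] {G H : SimpleGraph V}
    [DecidableRel G.Adj] [DecidableRel H.Adj] (h : G.lapMatrix R = H.lapMatrix R) : G = H := by
  ext i j
  by_cases hij : i = j
  · simp [hij]
  · have := congrFun₂ h i j
    simp only [lapMatrix, degMatrix, Matrix.sub_apply, diagonal_apply_ne _ hij, adjMatrix_apply,
      zero_sub, neg_inj] at this
    by_cases hG : G.Adj i j <;> by_cases hH : H.Adj i j <;> simp_all

theorem gammaMatrix_eq (G : SimpleGraph V) [DecidableRel G.Adj] :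
    gammaMatrix G = G.lapMatrix ℝ + (Fintype.card V : ℝ)⁻¹ • of fun _ _ ↦ 1 := by
  unfold gammaMatrix
  congr!

theorem gammaMatrix_injective : Function.Injective (gammaMatrix : SimpleGraph V → Matrix V V ℝ) :=
  fun G H h ↦ by
    classical
    exact eq_of_lapMatrix_eq (R := ℝ) (add_right_cancel h)

theorem dotProduct_gammaMatrix_mulVec (G : SimpleGraph V) [DecidableRel G.Adj] (x : V → ℝ) :
    x ⬝ᵥ (gammaMatrix G *ᵥ x) =
      x ⬝ᵥ (G.lapMatrix ℝ *ᵥ x) + (∑ i, x i) ^ 2 / Fintype.card V := by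
  rw [gammaMatrix_eq, add_mulVec, dotProduct_add, smul_mulVec, dotProduct_smul]
  simp [mulVec, dotProduct, sq, Finset.mul_sum, div_eq_inv_mul, mul_comm]

theorem posDef_gammaMatrix {G : SimpleGraph V} (hG : G.Connected) : (gammaMatrix G).PosDef := by
  classical
  refine .of_dotProduct_mulVec_pos ?_ fun x hx ↦ ?_
  · rw [gammaMatrix_eq]
    exact (G.isHermitian_lapMatrix ℝ).add (by ext; simp)
  rw [star_trivial, dotProduct_gammaMatrix_mulVec]
  have hL : 0 ≤ x ⬝ᵥ (G.lapMatrix ℝ *ᵥ x) := by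
    simpa using (posSemidef_lapMatrix ℝ G).dotProduct_mulVec_nonneg x
  rcases hL.lt_or_eq with hL | hL
  · exact add_pos_of_pos_of_nonneg hL (by positivity)
  obtain ⟨v⟩ := hG.nonempty
  have hconst : ∀ i, x i = x v := fun i ↦
    (lapMatrix_toLinearMap₂'_apply'_eq_zero_iff_forall_reachable G x).mp
      (by rw [toLinearMap₂'_apply']; exact hL.symm) i v (hG.preconnected i v)
  have hv : x v ≠ 0 := fun h0 ↦ hx (funext fun i ↦ (hconst i).trans h0)
  rw [← hL, zero_add]
  simp only [hconst, Finset.sum_const, Finset.card_univ, nsmul_eq_mul]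
  have : Nonempty V := ⟨v⟩
  positivity

theorem isUnit_det_gammaMatrix {G : SimpleGraph V} (hG : G.Connected) :
    IsUnit (gammaMatrix G).det :=
  (isUnit_iff_isUnit_det _).mp (posDef_gammaMatrix hG).isUnit

theorem gammaMatrix_mulVec_one [Nonempty V] (G : SimpleGraph V) :
    gammaMatrix G *ᵥ (fun _ ↦ 1) = fun _ ↦ 1 := by
  classical
  have hn : (Fintype.card V : ℝ) ≠ 0 := Nat.cast_ne_zero.mpr Fintype.card_ne_zero
  rw [gammaMatrix_eq, add_mulVec, lapMatrix_mulVec_const_eq_zero, zero_add]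
  ext i
  simp [mulVec, dotProduct, hn]

theorem sum_inv_gammaMatrix_apply {G : SimpleGraph V} (hG : G.Connected) (i : V) :
    ∑ j, (gammaMatrix G)⁻¹ i j = 1 := by
  have := hG.nonempty
  have h : (gammaMatrix G)⁻¹ *ᵥ (fun _ ↦ 1) = fun _ ↦ 1 := by
    conv_lhs => rw [← gammaMatrix_mulVec_one G]
    rw [mulVec_mulVec, nonsing_inv_mul _ (isUnit_det_gammaMatrix hG), one_mulVec]
  simpa [mulVec, dotProduct] using congrFun h i

theorem posSemidef_gammaMatrix_sub_gammaMatrix {G H : SimpleGraph V} (h : G ≤ H) :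
    (gammaMatrix H - gammaMatrix G).PosSemidef := by
  classical
  rw [gammaMatrix_eq, gammaMatrix_eq, add_sub_add_right_eq_sub]
  exact posSemidef_lapMatrix_sub_lapMatrix h

theorem trace_inv_gammaMatrix_lt_of_lt {G H : SimpleGraph V} (hG : G.Connected) (h : G < H) :
    (gammaMatrix H)⁻¹.trace < (gammaMatrix G)⁻¹.trace := by
  have hH : H.Connected := hG.mono h.le
  have hpsd : ((gammaMatrix G)⁻¹ - (gammaMatrix H)⁻¹).PosSemidef :=
    (posDef_gammaMatrix hG).posSemidef_inv_sub_inv (posDef_gammaMatrix hH)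
      (posSemidef_gammaMatrix_sub_gammaMatrix h.le)
  have hne : (gammaMatrix G)⁻¹ - (gammaMatrix H)⁻¹ ≠ 0 := fun h0 ↦
    h.ne (gammaMatrix_injective (inv_inj (sub_eq_zero.mp h0) (isUnit_det_gammaMatrix hG)))
  have hpos := hpsd.trace_nonneg.lt_of_ne (Ne.symm (mt hpsd.trace_eq_zero_iff.mp hne))
  rwa [trace_sub, sub_pos] at hpos

theorem lapMatrix_top {R : Type*} [Ring R] :
    (⊤ : SimpleGraph V).lapMatrix R = (Fintype.card V : R) • 1 - of fun _ _ ↦ 1 := by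
  ext i j
  by_cases hij : i = j
  · have : 1 ≤ Fintype.card V := Fintype.card_pos_iff.mpr ⟨i⟩
    simp [lapMatrix, degMatrix, hij, Nat.cast_sub this]
  · simp [lapMatrix, degMatrix, hij]

theorem inv_gammaMatrix_top [Nonempty V] :
    (gammaMatrix (⊤ : SimpleGraph V))⁻¹ = (Fintype.card V : ℝ)⁻¹ • 1 +
      (((Fintype.card V : ℝ) - 1) / (Fintype.card V : ℝ) ^ 2) • of fun _ _ ↦ 1 := by
  classical
  have hn : (Fintype.card V : ℝ) ≠ 0 := Nat.cast_ne_zero.mpr Fintype.card_ne_zero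
  refine inv_eq_right_inv ?_
  rw [gammaMatrix_eq, lapMatrix_top]
  set J : Matrix V V ℝ := of fun _ _ ↦ 1
  have hJ : J * J = (Fintype.card V : ℝ) • J := by ext; simp [J, mul_apply]
  simp only [add_mul, mul_add, sub_mul, Matrix.one_mul, Matrix.mul_one,
    smul_mul_assoc, mul_smul_comm, hJ, smul_smul]
  match_scalars
  · field_simp
  · field_simp
    ring

noncomputable def kirchhoffIndex (G : SimpleGraph V) : ℝ :=
  (1 / 2 : ℝ) * ∑ i, ∑ j, resDist G i j

theorem kirchhoffIndex_eq {G : SimpleGraph V} (hG : G.Connected) :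
    kirchhoffIndex G = Fintype.card V * (gammaMatrix G)⁻¹.trace - Fintype.card V := by
  simp only [kirchhoffIndex, resDist, Finset.sum_sub_distrib, Finset.sum_add_distrib,
    ← Finset.mul_sum, sum_inv_gammaMatrix_apply hG, Finset.sum_const, Finset.card_univ,
    nsmul_eq_mul, trace, diag_apply]
  ring

theorem kirchhoffIndex_top [Nonempty V] :
    kirchhoffIndex (⊤ : SimpleGraph V) = Fintype.card V - 1 := by
  have hn : (Fintype.card V : ℝ) ≠ 0 := Nat.cast_ne_zero.mpr Fintype.card_ne_zero
  rw [kirchhoffIndex_eq connected_top, inv_gammaMatrix_top, trace_add, trace_smul, trace_smul,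
    trace_one]
  simp only [trace, diag_apply, of_apply, Finset.sum_const, Finset.card_univ, nsmul_eq_mul,
    smul_eq_mul, mul_one]
  field_simp
  ring

theorem kirchhoffIndex_lt_of_lt {G H : SimpleGraph V} (hG : G.Connected) (h : G < H) :
    kirchhoffIndex H < kirchhoffIndex G := by
  have := hG.nonempty
  rw [kirchhoffIndex_eq hG, kirchhoffIndex_eq (hG.mono h.le)]
  gcongr
  exact trace_inv_gammaMatrix_lt_of_lt hG h

end SimpleGraph

theorem kirchhoff_ge_card_sub_one_general (G : SimpleGraph V) (hG : G.Connected) :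
    (Fintype.card V : ℝ) - 1 ≤ (1 / 2 : ℝ) * ∑ i : V, ∑ j : V, resDist G i j ∧
    ((1 / 2 : ℝ) * ∑ i : V, ∑ j : V, resDist G i j = (Fintype.card V : ℝ) - 1 ↔ G = ⊤) := by
  have := hG.nonempty
  change _ ≤ kirchhoffIndex G ∧ (kirchhoffIndex G = _ ↔ G = ⊤)
  rw [← kirchhoffIndex_top]
  rcases (le_top : G ≤ ⊤).eq_or_lt with rfl | hlt
  · simp
  · have hlt' := kirchhoffIndex_lt_of_lt hG hlt
    exact ⟨hlt'.le, iff_of_false hlt'.ne' hlt.ne⟩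

theorem kirchhoff_ge_card_sub_one (G : SimpleGraph V) [Nonempty V]
    (hn : 2 ≤ Fintype.card V) (hG : G.Connected) :
    (Fintype.card V : ℝ) - 1 ≤ (1 / 2 : ℝ) * ∑ i : V, ∑ j : V, resDist G i j ∧
    ((1 / 2 : ℝ) * ∑ i : V, ∑ j : V, resDist G i j = (Fintype.card V : ℝ) - 1 ↔ G = ⊤) :=
  kirchhoff_ge_card_sub_one_general G hG
end

section
/- The Kirchhoff index of a finite connected simple graph G on n vertices equals n times the sum of the reciprocals of the nonzero eigenvalues of the Laplacian of G. -/
open Matrix SimpleGraph Finset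

variable {V : Type*} [Fintype V] [DecidableEq V]

/-! On an eigenvector `u` of `L` with eigenvalue `μ ≠ 0`, `u` is orthogonal to the all-ones vector
(because `𝟙ᵀ L = 0`), so `Γ u = μ u`; on an eigenvector with `μ = 0`, `u` is constant by
connectedness, so `Γ u = u`. Thus the orthonormal eigenbasis of `L` diagonalizes `Γ`, and
`tr Γ⁻¹ = ∑_{μ ≠ 0} μ⁻¹ + #{μ = 0} = ∑_{μ ≠ 0} μ⁻¹ + 1`, the zero eigenvalues counting the
connected components. Since `Γ 𝟙 = 𝟙`, the entries of `Γ⁻¹` sum to `n`, and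
`∑ᵢⱼ Ωᵢⱼ = 2 n tr Γ⁻¹ - 2 ∑ᵢⱼ (Γ⁻¹)ᵢⱼ = 2 n (tr Γ⁻¹ - 1)`. -/

namespace Matrix

variable {n R : Type*} [Fintype n] [CommRing R]

theorem sum_sum_diag_add_diag_sub_two_mul (M : Matrix n n R) :
    ∑ i, ∑ j, (M i i + M j j - 2 * M i j) = 2 * (Fintype.card n * trace M - ∑ i, ∑ j, M i j) := by
  simp only [Finset.sum_sub_distrib, Finset.sum_add_distrib, Finset.sum_const, Finset.card_univ,
    nsmul_eq_mul, ← Finset.mul_sum, trace, diag]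
  ring

variable [DecidableEq n]

theorem sum_sum_inv_eq_card_of_mulVec_one {M : Matrix n n R} (hM : IsUnit M.det)
    (h : M *ᵥ 1 = 1) : ∑ i, ∑ j, M⁻¹ i j = Fintype.card n := by
  have hinv : M⁻¹ *ᵥ 1 = 1 := by
    conv_lhs => rw [← h, mulVec_mulVec, nonsing_inv_mul M hM, one_mulVec]
  simpa [mulVec, dotProduct] using congrArg (fun v => ∑ i, v i) hinv

variable {𝕜 : Type*} [Field 𝕜] [StarRing 𝕜] {U : Matrix n n 𝕜}

theorem eq_mul_diagonal_mul_star_of_mul_eq (hU : U ∈ unitaryGroup n 𝕜) {A : Matrix n n 𝕜}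
    {d : n → 𝕜} (h : A * U = U * diagonal d) : A = U * diagonal d * star U := by
  rw [← h, Matrix.mul_assoc, Unitary.mul_star_self_of_mem hU, Matrix.mul_one]

theorem mul_diagonal_mul_star_mul_diagonal_inv (hU : U ∈ unitaryGroup n 𝕜) {d : n → 𝕜}
    (hd : ∀ i, d i ≠ 0) : (U * diagonal d * star U) * (U * diagonal d⁻¹ * star U) = 1 := by
  have hdd : diagonal d * diagonal d⁻¹ = 1 := by
    rw [diagonal_mul_diagonal, ← diagonal_one]
    exact congrArg diagonal (funext fun i => mul_inv_cancel₀ (hd i))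
  calc (U * diagonal d * star U) * (U * diagonal d⁻¹ * star U)
      = U * (diagonal d * (star U * U) * diagonal d⁻¹) * star U := by noncomm_ring
    _ = 1 := by
      rw [Unitary.star_mul_self_of_mem hU, Matrix.mul_one, hdd, Matrix.mul_one,
        Unitary.mul_star_self_of_mem hU]

theorem trace_mul_diagonal_mul_star (hU : U ∈ unitaryGroup n 𝕜) (d : n → 𝕜) :
    trace (U * diagonal d * star U) = ∑ i, d i := by
  rw [trace_mul_cycle, Unitary.star_mul_self_of_mem hU, Matrix.one_mul, trace_diagonal]

end Matrix

namespace SimpleGraph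

variable (G : SimpleGraph V) [DecidableRel G.Adj]

theorem sum_eq_zero_of_lapMatrix_mulVec_eq_smul {R : Type*} [Field R] {x : V → R} {μ : R}
    (hμ : μ ≠ 0) (h : G.lapMatrix R *ᵥ x = μ • x) : ∑ i, x i = 0 := by
  have hcolsum : (fun _ ↦ 1) ᵥ* G.lapMatrix R = 0 := by
    rw [← mulVec_transpose, (G.isSymm_lapMatrix (R := R)).eq, lapMatrix_mulVec_const_eq_zero]
  have : μ * ∑ i, x i = 0 := by
    calc μ * ∑ i, x i = (fun _ ↦ 1) ⬝ᵥ (G.lapMatrix R *ᵥ x) := by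
          simp [h, dotProduct, Finset.mul_sum]
      _ = 0 := by rw [dotProduct_mulVec, hcolsum, zero_dotProduct]
  exact (mul_eq_zero.mp this).resolve_left hμ

theorem card_filter_eigenvalues_eq_zero (hL : (G.lapMatrix ℝ).IsHermitian) :
    (univ.filter fun i ↦ hL.eigenvalues i = 0).card = Fintype.card G.ConnectedComponent := by
  have hrank := hL.rank_eq_card_non_zero_eigs
  have hnullity := LinearMap.finrank_range_add_finrank_ker (Matrix.toLin' (G.lapMatrix ℝ))
  rw [card_connectedComponent_eq_finrank_ker_toLin'_lapMatrix]
  rw [Matrix.rank, ← Matrix.toLin'_apply', Fintype.card_subtype] at hrank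
  rw [hrank, Module.finrank_fintype_fun_eq_card] at hnullity
  have := card_filter_add_card_filter_not (s := univ) (fun i ↦ hL.eigenvalues i = 0)
  simp only [card_univ] at this
  simp only [ne_eq] at hnullity
  omega

variable {G} in
theorem Connected.card_connectedComponent (hG : G.Connected) :
    Fintype.card G.ConnectedComponent = 1 :=
  have := hG.preconnected.subsingleton_connectedComponent
  Fintype.card_eq_one_iff.mpr
    ⟨G.connectedComponentMk hG.nonempty.some, fun _ ↦ Subsingleton.elim _ _⟩

end SimpleGraph

section gammaMatrix

variable {G : SimpleGraph V} [DecidableRel G.Adj]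

theorem gammaMatrix_mulVec (x : V → ℝ) :
    gammaMatrix G *ᵥ x = G.lapMatrix ℝ *ᵥ x + fun _ ↦ (Fintype.card V : ℝ)⁻¹ * ∑ i, x i := by
  have hΓ : gammaMatrix G = G.lapMatrix ℝ + (Fintype.card V : ℝ)⁻¹ • of fun _ _ ↦ 1 := by
    unfold gammaMatrix
    congr!
  ext j
  simp [hΓ, mulVec, dotProduct, add_mul, Finset.sum_add_distrib, Finset.mul_sum]

theorem gammaMatrix_mulVec_of_lapMatrix_mulVec_eq_smul {x : V → ℝ} {μ : ℝ} (hμ : μ ≠ 0)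
    (h : G.lapMatrix ℝ *ᵥ x = μ • x) : gammaMatrix G *ᵥ x = μ • x := by
  rw [gammaMatrix_mulVec, h, G.sum_eq_zero_of_lapMatrix_mulVec_eq_smul hμ h, mul_zero]
  exact add_zero _

theorem gammaMatrix_mulVec_of_lapMatrix_mulVec_eq_zero (hG : G.Connected) {x : V → ℝ}
    (h : G.lapMatrix ℝ *ᵥ x = 0) : gammaMatrix G *ᵥ x = x := by
  have hconst := G.lapMatrix_mulVec_eq_zero_iff_forall_reachable.mp h
  have : Nonempty V := hG.nonempty
  ext j
  have hsum : ∑ i, x i = Fintype.card V * x j := by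
    simp [fun i ↦ hconst i j (hG.preconnected i j)]
  rw [gammaMatrix_mulVec, h, Pi.add_apply, hsum, inv_mul_cancel_left₀ (by positivity)]
  simp

end gammaMatrix

section gammaEigenvalues

variable {G : SimpleGraph V} [DecidableRel G.Adj] (hL : (G.lapMatrix ℝ).IsHermitian)

noncomputable def gammaEigenvalues (j : V) : ℝ :=
  if hL.eigenvalues j = 0 then 1 else hL.eigenvalues j

theorem gammaEigenvalues_ne_zero (j : V) : gammaEigenvalues hL j ≠ 0 := by
  unfold gammaEigenvalues
  split_ifs with hμ
  exacts [one_ne_zero, hμ]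

theorem sum_inv_gammaEigenvalues :
    ∑ j, (gammaEigenvalues hL j)⁻¹ =
      ∑ j ∈ univ.filter (fun j ↦ hL.eigenvalues j ≠ 0), (hL.eigenvalues j)⁻¹ +
        (univ.filter fun j ↦ hL.eigenvalues j = 0).card := by
  rw [sum_filter, card_eq_sum_ones, Nat.cast_sum, sum_filter, ← sum_add_distrib]
  refine sum_congr rfl fun j _ ↦ ?_
  unfold gammaEigenvalues
  split_ifs <;> simp_all

theorem gammaMatrix_mul_eigenvectorUnitary (hG : G.Connected) :
    gammaMatrix G * hL.eigenvectorUnitary =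
      (hL.eigenvectorUnitary : Matrix V V ℝ) * diagonal (gammaEigenvalues hL) := by
  ext i j
  have hcol : gammaMatrix G *ᵥ ⇑(hL.eigenvectorBasis j) =
      gammaEigenvalues hL j • ⇑(hL.eigenvectorBasis j) := by
    have h := hL.mulVec_eigenvectorBasis j
    unfold gammaEigenvalues
    split_ifs with hμ
    · rw [one_smul]
      exact gammaMatrix_mulVec_of_lapMatrix_mulVec_eq_zero hG (by rw [h, hμ, zero_smul])
    · exact gammaMatrix_mulVec_of_lapMatrix_mulVec_eq_smul hμ h
  rw [mul_diagonal, mul_apply]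
  simpa [mulVec, dotProduct, mul_comm] using congrFun hcol i

end gammaEigenvalues

theorem kirchhoff_eq_card_mul_sum_inv_eigenvalues_general (G : SimpleGraph V)
    [DecidableRel G.Adj] (hG : G.Connected) (hL : (G.lapMatrix ℝ).IsHermitian) :
    (1 / 2 : ℝ) * ∑ i : V, ∑ j : V, resDist G i j =
      (Fintype.card V : ℝ) *
        ∑ i ∈ Finset.univ.filter (fun i => hL.eigenvalues i ≠ 0), (hL.eigenvalues i)⁻¹ := by
  set U : Matrix V V ℝ := ↑hL.eigenvectorUnitary
  have hU : U ∈ unitaryGroup V ℝ := hL.eigenvectorUnitary.2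
  have hΓ : gammaMatrix G = U * diagonal (gammaEigenvalues hL) * star U :=
    eq_mul_diagonal_mul_star_of_mul_eq hU (gammaMatrix_mul_eigenvectorUnitary hL hG)
  have hright : gammaMatrix G * (U * diagonal (gammaEigenvalues hL)⁻¹ * star U) = 1 := by
    rw [hΓ]
    exact mul_diagonal_mul_star_mul_diagonal_inv hU (gammaEigenvalues_ne_zero hL)
  have htrace : trace (gammaMatrix G)⁻¹ = ∑ j, (gammaEigenvalues hL j)⁻¹ := by
    rw [inv_eq_right_inv hright, trace_mul_diagonal_mul_star hU]
    rfl
  have hsum : ∑ i, ∑ j, (gammaMatrix G)⁻¹ i j = Fintype.card V :=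
    sum_sum_inv_eq_card_of_mulVec_one (isUnit_det_of_right_inverse hright)
      (gammaMatrix_mulVec_of_lapMatrix_mulVec_eq_zero hG G.lapMatrix_mulVec_const_eq_zero)
  rw [show ∑ i, ∑ j, resDist G i j = _ from sum_sum_diag_add_diag_sub_two_mul _, hsum, htrace,
    sum_inv_gammaEigenvalues, G.card_filter_eigenvalues_eq_zero, hG.card_connectedComponent]
  ring

theorem kirchhoff_eq_card_mul_sum_inv_eigenvalues (G : SimpleGraph V) [Nonempty V]
    [DecidableRel G.Adj] (hG : G.Connected) (hL : (G.lapMatrix ℝ).IsHermitian) :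
    (1 / 2 : ℝ) * ∑ i : V, ∑ j : V, resDist G i j =
      (Fintype.card V : ℝ) *
        ∑ i ∈ Finset.univ.filter (fun i => hL.eigenvalues i ≠ 0), (hL.eigenvalues i)⁻¹ :=
  kirchhoff_eq_card_mul_sum_inv_eigenvalues_general G hG hL
end
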